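/- arXiv:2205.11093 — 5 statements merged into one kernel-verified Lean document; each statement's English description precedes it below -/
import Mathlib

section
/- Let T : H → H be nonexpansive with fixed point set Fix T containing w⋆. Consider the optimized Halpern's method (OHM): w_{k+1/2} = (1/(k+1)) • w_0 + (k/(k+1)) • w_k, w_{k+1} = T(w_{k+1/2}), with w_0 given. Then the fixed-point residual satisfies ‖w_{k+1/2} - T w_{k+1/2}‖² ≤ 4‖w_0 - w⋆‖²/(k+1)² for all k ≥ 0. -/
open RealInnerProductSpace

lemma coco_aux {H : Type*} [NormedAddCommGroup H] [InnerProductSpace ℝ H]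
    (T : H → H) (hT : ∀ x y : H, ‖T x - T y‖ ≤ ‖x - y‖) (x y : H) :
    ‖(x - T x) - (y - T y)‖ ^ 2 ≤ 2 * ⟪x - y, (x - T x) - (y - T y)⟫ := by
  have h1 : ‖(x - y) - ((x - T x) - (y - T y))‖ ^ 2 ≤ ‖x - y‖ ^ 2 := by
    have he : (x - y) - ((x - T x) - (y - T y)) = T x - T y := by abel
    rw [he]
    exact pow_le_pow_left₀ (norm_nonneg _) (hT x y) 2
  rw [norm_sub_sq_real] at h1
  linarith

theorem stmt_5 {H : Type*} [NormedAddCommGroup H] [InnerProductSpace ℝ H]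
    (T : H → H) (hT : ∀ x y : H, ‖T x - T y‖ ≤ ‖x - y‖)
    (ws : H) (hfix : T ws = ws)
    (w whalf : ℕ → H)
    (hhalf : ∀ k : ℕ, whalf k =
      (1 / ((k : ℝ) + 1)) • w 0 + ((k : ℝ) / ((k : ℝ) + 1)) • w k)
    (hw : ∀ k : ℕ, w (k + 1) = T (whalf k)) :
    ∀ k : ℕ, ‖whalf k - T (whalf k)‖ ^ 2 ≤ 4 * ‖w 0 - ws‖ ^ 2 / ((k : ℝ) + 1) ^ 2 := by
  set f : ℕ → H := fun n => whalf n - T (whalf n) with hf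
  have hx0 : whalf 0 = w 0 := by simpa using hhalf 0
  have key : ∀ n : ℕ, ((n:ℝ)+2) • whalf (n+1) = w 0 + ((n:ℝ)+1) • T (whalf n) := by
    intro n
    have h1 := hhalf (n+1)
    rw [hw n] at h1
    push_cast at h1
    have hn2 : ((n:ℝ)+2) ≠ 0 := by positivity
    rw [h1]
    match_scalars <;> (field_simp; try ring)
  set V : ℕ → ℝ := fun n =>
    ((n:ℝ)*((n:ℝ)+1)/2) * ‖f n‖^2 + ((n:ℝ)+1) * ⟪f n, whalf n - w 0⟫ with hV
  have hV0 : V 0 = 0 := by simp [hV, hx0]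
  have hVstep : ∀ n : ℕ, V (n+1) ≤ V n := by
    intro n
    have hTn : T (whalf n) = whalf n - f n := by simp [hf]
    have hk := key n
    rw [hTn] at hk
    have hvid1 : ((n:ℝ)+2) • (whalf (n+1) - whalf n)
        = -(whalf n - w 0) - ((n:ℝ)+1) • f n := by
      rw [smul_sub, hk]; module
    have hvid2 : ((n:ℝ)+2) • (whalf (n+1) - w 0)
        = ((n:ℝ)+1) • ((whalf n - w 0) - f n) := by
      rw [smul_sub, hk]; module
    have hcoco : ‖f (n+1) - f n‖^2 ≤ 2 * ⟪whalf (n+1) - whalf n, f (n+1) - f n⟫ :=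
      coco_aux T hT (whalf (n+1)) (whalf n)
    have hc2 := mul_le_mul_of_nonneg_left hcoco (show (0:ℝ) ≤ (n:ℝ)+2 by positivity)
    have hrw : ((n:ℝ)+2) * (2 * ⟪whalf (n+1) - whalf n, f (n+1) - f n⟫)
        = 2 * ⟪-(whalf n - w 0) - ((n:ℝ)+1) • f n, f (n+1) - f n⟫ := by
      rw [← hvid1, real_inner_smul_left]; ring
    rw [hrw] at hc2
    have e2 : ((n:ℝ)+2) * ⟪f (n+1), whalf (n+1) - w 0⟫
        = ((n:ℝ)+1) * (⟪f (n+1), whalf n - w 0⟫ - ⟪f (n+1), f n⟫) := by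
      rw [← real_inner_smul_right, hvid2, real_inner_smul_right, inner_sub_right]
    have hgoal : V (n+1) = ((n:ℝ)+1)*((n:ℝ)+2)/2 * ‖f (n+1)‖^2
        + ((n:ℝ)+1) * (⟪f (n+1), whalf n - w 0⟫ - ⟪f (n+1), f n⟫) := by
      simp only [hV]
      push_cast
      rw [show ((n:ℝ)+1+1) = (n:ℝ)+2 by ring, e2]
    rw [hgoal]
    simp only [hV]
    set d := whalf n - w 0 with hd
    rw [norm_sub_sq_real] at hc2
    simp only [inner_sub_left, inner_neg_left, real_inner_smul_left, inner_sub_right] at hc2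
    rw [real_inner_comm (f (n+1)) d, real_inner_comm (f n) d,
      real_inner_comm (f (n+1)) (f n), real_inner_self_eq_norm_sq] at hc2
    nlinarith [mul_le_mul_of_nonneg_left hc2 (show (0:ℝ) ≤ ((n:ℝ)+1)/2 by positivity)]
  have hVle : ∀ n : ℕ, V n ≤ 0 := by
    intro n
    induction n with
    | zero => exact le_of_eq hV0
    | succ m ih => exact le_trans (hVstep m) ih
  intro k
  have h1 : ‖f k‖^2 ≤ 2 * ⟪whalf k - ws, f k⟫ := by
    have := coco_aux T hT (whalf k) ws
    simpa [hfix, hf] using this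
  have h2 := hVle k
  have h3 : ⟪f k, whalf k - w 0⟫ = ⟪f k, whalf k - ws⟫ - ⟪f k, w 0 - ws⟫ := by
    rw [← inner_sub_right]
    congr 1
    abel
  have h4 : ⟪f k, w 0 - ws⟫ ≤ ‖f k‖ * ‖w 0 - ws‖ := real_inner_le_norm _ _
  rw [real_inner_comm] at h1
  have hK1 : (0:ℝ) ≤ (k:ℝ)+1 := by positivity
  have hC := mul_le_mul_of_nonneg_left h1 hK1
  have hD := mul_le_mul_of_nonneg_left h4 hK1
  simp only [hV] at h2
  rw [h3] at h2
  have hmain : ((k:ℝ)+1)^2 * ‖f k‖^2 ≤ 2*((k:ℝ)+1) * (‖f k‖ * ‖w 0 - ws‖) := by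
    nlinarith [h2, hC, hD]
  rw [le_div_iff₀ (show (0:ℝ) < ((k:ℝ)+1)^2 by positivity)]
  nlinarith [sq_nonneg (((k:ℝ)+1)*‖f k‖ - 2*‖w 0 - ws‖), hmain]
end

section
/- Let B : H → H be monotone. Define for k ≥ 0 the iterates of FEG and OHM coupled as follows: given sequences (z_k), (z_{k+1/2}), (w_k) satisfying z_{k+1} = β_k • z_0 + (1-β_k) • z_k - α • B z_{k+1/2} and w_{k+1/2} = β_k • w_0 + (1-β_k) • w_k, w_{k+1} + α • B w_{k+1} = w_{k+1/2}, with z_0 = w_0, z_{k+1/2} = β_k • z_0 + (1-β_k) • (z_k - α • B z_k), and β_k = 1/(k+1). Then for every k, (k+1)²‖z_{k+1} - w_{k+1}‖² ≤ k²‖z_k - w_k‖² + α²‖k • B z_k - (k+1) • B z_{k+1/2}‖². -/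
open RealInnerProductSpace

private lemma stmt_6_aux {H : Type*} [NormedAddCommGroup H] [InnerProductSpace ℝ H]
    (α : ℝ) (hα : 0 ≤ α) (a v c : H) (h : 0 ≤ ⟪v, a - α • (v + c)⟫) :
    ‖a - α • v‖ ^ 2 ≤ ‖a‖ ^ 2 + α ^ 2 * ‖c‖ ^ 2 := by
  have h1 : (0:ℝ) ≤ ⟪v, a⟫ - α * ⟪v, v⟫ - α * ⟪v, c⟫ := by
    have := h
    rw [inner_sub_right, real_inner_smul_right, inner_add_right] at this
    linarith
  have hvv : ⟪v, v⟫ = ‖v‖ ^ 2 := real_inner_self_eq_norm_sq v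
  have e : ‖a - α • v‖ ^ 2 = ‖a‖ ^ 2 - 2 * (α * ⟪v, a⟫) + α ^ 2 * ‖v‖ ^ 2 := by
    rw [norm_sub_sq_real, norm_smul, real_inner_smul_right, Real.norm_eq_abs, mul_pow,
      sq_abs, real_inner_comm a v]
    try ring
  have hvc : (0:ℝ) ≤ ‖v + c‖ ^ 2 := sq_nonneg _
  have evc : ‖v + c‖ ^ 2 = ‖v‖ ^ 2 + 2 * ⟪v, c⟫ + ‖c‖ ^ 2 := norm_add_sq_real v c
  nlinarith [mul_nonneg hα h1]

theorem stmt_6 {H : Type*} [NormedAddCommGroup H] [InnerProductSpace ℝ H]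
    (B : H → H) (α : ℝ) (hα : 0 < α)
    (hmono : ∀ u v : H, 0 ≤ ⟪B u - B v, u - v⟫)
    (z zhalf w whalf : ℕ → H)
    (h0 : z 0 = w 0)
    (hzhalf : ∀ k : ℕ, zhalf k =
      (1 / ((k : ℝ) + 1)) • z 0 + (1 - 1 / ((k : ℝ) + 1)) • (z k - α • B (z k)))
    (hz : ∀ k : ℕ, z (k + 1) =
      (1 / ((k : ℝ) + 1)) • z 0 + (1 - 1 / ((k : ℝ) + 1)) • z k - α • B (zhalf k))
    (hwhalf : ∀ k : ℕ, whalf k =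
      (1 / ((k : ℝ) + 1)) • w 0 + (1 - 1 / ((k : ℝ) + 1)) • w k)
    (hw : ∀ k : ℕ, w (k + 1) + α • B (w (k + 1)) = whalf k) :
    ∀ k : ℕ, ((k : ℝ) + 1) ^ 2 * ‖z (k + 1) - w (k + 1)‖ ^ 2 ≤
      (k : ℝ) ^ 2 * ‖z k - w k‖ ^ 2 +
        α ^ 2 * ‖(k : ℝ) • B (z k) - ((k : ℝ) + 1) • B (zhalf k)‖ ^ 2 := by
  intro k
  have hk1 : (0:ℝ) < (k:ℝ) + 1 := by positivity
  have hk1' : ((k:ℝ) + 1) ≠ 0 := ne_of_gt hk1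
  have hwrec : w (k+1) = (1 / ((k : ℝ) + 1)) • w 0 + (1 - 1 / ((k : ℝ) + 1)) • w k
      - α • B (w (k+1)) := by
    rw [← hwhalf k, ← hw k]; abel
  have E1 : ((k:ℝ)+1) • (z (k+1) - w (k+1)) =
      (k:ℝ) • (z k - w k) - α • (((k:ℝ)+1) • (B (zhalf k) - B (w (k+1)))) := by
    obtain ⟨u, hu⟩ : ∃ u, B (w (k+1)) = u := ⟨_, rfl⟩
    rw [hu] at hwrec ⊢
    rw [hz k, hwrec, h0]
    match_scalars <;> first | (field_simp; ring) | field_simp | ring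
  have E2 : ((k:ℝ)+1) • (zhalf k - w (k+1)) =
      (k:ℝ) • (z k - w k) - α • ((((k:ℝ)+1) • (B (zhalf k) - B (w (k+1)))) +
        ((k:ℝ) • B (z k) - ((k:ℝ)+1) • B (zhalf k))) := by
    obtain ⟨u, hu⟩ : ∃ u, B (w (k+1)) = u := ⟨_, rfl⟩
    obtain ⟨t, ht⟩ : ∃ t, B (zhalf k) = t := ⟨_, rfl⟩
    rw [hu] at hwrec ⊢
    rw [ht]
    rw [hzhalf k, hwrec, h0]
    match_scalars <;> first | (field_simp; ring) | field_simp | ring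
  have hmon : (0:ℝ) ≤ ⟪((k:ℝ)+1) • (B (zhalf k) - B (w (k+1))),
      (k:ℝ) • (z k - w k) - α • ((((k:ℝ)+1) • (B (zhalf k) - B (w (k+1)))) +
        ((k:ℝ) • B (z k) - ((k:ℝ)+1) • B (zhalf k)))⟫ := by
    rw [← E2, real_inner_smul_left, real_inner_smul_right]
    exact mul_nonneg hk1.le (mul_nonneg hk1.le (hmono (zhalf k) (w (k+1))))
  have key := stmt_6_aux α hα.le ((k:ℝ) • (z k - w k))
    (((k:ℝ)+1) • (B (zhalf k) - B (w (k+1))))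
    ((k:ℝ) • B (z k) - ((k:ℝ)+1) • B (zhalf k)) hmon
  have L : ((k:ℝ) + 1) ^ 2 * ‖z (k + 1) - w (k + 1)‖ ^ 2 =
      ‖(k:ℝ) • (z k - w k) - α • (((k:ℝ)+1) • (B (zhalf k) - B (w (k+1))))‖ ^ 2 := by
    rw [← E1, norm_smul, Real.norm_eq_abs, abs_of_pos hk1, mul_pow]
  have R : (k : ℝ) ^ 2 * ‖z k - w k‖ ^ 2 = ‖(k:ℝ) • (z k - w k)‖ ^ 2 := by
    rw [norm_smul, Real.norm_eq_abs, abs_of_nonneg (by positivity : (0:ℝ) ≤ (k:ℝ)), mul_pow]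
  rw [L, R]
  exact key
end

section
/- Let B : H → H be monotone and L-Lipschitz with a zero z⋆ (B z⋆ = 0), and let α ∈ (0, 1/L). Let (z_k), (z_{k+1/2}) be the FEG iterates: z_{k+1/2} = β_k • z_0 + (1-β_k) • (z_k - α • B z_k), z_{k+1} = β_k • z_0 + (1-β_k) • z_k - α • B z_{k+1/2}, with β_k = 1/(k+1). Then Σ_{k=0}^∞ ‖k • B z_k - (k+1) • B z_{k+1/2}‖² ≤ ‖z_0 - z⋆‖² / (α²(1 - α²L²)). -/
set_option maxHeartbeats 1000000


open RealInnerProductSpace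

theorem stmt_7 {H : Type*} [NormedAddCommGroup H] [InnerProductSpace ℝ H]
    (B : H → H) (L α : ℝ) (hL : 0 < L)
    (hmono : ∀ u v : H, 0 ≤ ⟪B u - B v, u - v⟫)
    (hlip : ∀ u v : H, ‖B u - B v‖ ≤ L * ‖u - v‖)
    (zs : H) (hzs : B zs = 0)
    (hα0 : 0 < α) (hα1 : α < 1 / L)
    (z zhalf : ℕ → H)
    (hzhalf : ∀ k : ℕ, zhalf k =
      (1 / ((k : ℝ) + 1)) • z 0 + (1 - 1 / ((k : ℝ) + 1)) • (z k - α • B (z k)))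
    (hz : ∀ k : ℕ, z (k + 1) =
      (1 / ((k : ℝ) + 1)) • z 0 + (1 - 1 / ((k : ℝ) + 1)) • z k - α • B (zhalf k)) :
    ∑' k : ℕ, ‖(k : ℝ) • B (z k) - ((k : ℝ) + 1) • B (zhalf k)‖ ^ 2 ≤
      ‖z 0 - zs‖ ^ 2 / (α ^ 2 * (1 - α ^ 2 * L ^ 2)) := by
  have hLα : α * L < 1 := by
    rw [lt_div_iff₀ hL] at hα1; linarith
  have hc : 0 < α ^ 2 * (1 - α ^ 2 * L ^ 2) := by
    have h1 : α ^ 2 * L ^ 2 < 1 := by nlinarith [mul_pos hα0 hL]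
    have h2 : (0:ℝ) < α ^ 2 := by positivity
    nlinarith
  set V : ℕ → ℝ := fun k =>
    α ^ 2 * (k : ℝ) ^ 2 * ‖B (z k)‖ ^ 2 + 2 * α * (k : ℝ) * ⟪B (z k), z k - z 0⟫ with hV
  -- key one-step descent inequality
  have key : ∀ k : ℕ, α ^ 2 * (1 - α ^ 2 * L ^ 2) *
      ‖(k : ℝ) • B (z k) - ((k : ℝ) + 1) • B (zhalf k)‖ ^ 2 ≤ V k - V (k + 1) := by
    intro k
    have hm : (0:ℝ) < (k : ℝ) + 1 := by positivity
    have hm0 : ((k : ℝ) + 1) ≠ 0 := ne_of_gt hm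
    have hn0 : (0:ℝ) ≤ (k : ℝ) := Nat.cast_nonneg k
    -- vector identities
    have e1 : ((k:ℝ) + 1) • (z (k + 1) - z 0) =
        (k:ℝ) • (z k - z 0) - (((k:ℝ) + 1) * α) • B (zhalf k) := by
      rw [hz k]; match_scalars <;> (field_simp; try ring)
    have e2 : ((k:ℝ) + 1) • (z (k + 1) - z k) =
        (-1 : ℝ) • (z k - z 0) - (((k:ℝ) + 1) * α) • B (zhalf k) := by
      rw [hz k]; match_scalars <;> (field_simp; try ring)
    have e3 : ((k:ℝ) + 1) • (z (k + 1) - zhalf k) =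
        α • ((k:ℝ) • B (z k) - ((k:ℝ) + 1) • B (zhalf k)) := by
      rw [hz k, hzhalf k]; match_scalars <;> (field_simp; try ring)
    -- monotonicity between z (k+1) and z k (scalar form)
    have mono3 : 0 ≤ (⟪B (z k), z k - z 0⟫ - ⟪B (z (k+1)), z k - z 0⟫) +
        ((k:ℝ) + 1) * α * (⟪B (z k), B (zhalf k)⟫ - ⟪B (z (k+1)), B (zhalf k)⟫) := by
      have h1 : 0 ≤ ⟪B (z (k+1)) - B (z k), ((k:ℝ) + 1) • (z (k + 1) - z k)⟫ := by
        rw [real_inner_smul_right]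
        exact mul_nonneg hm.le (hmono _ _)
      rw [e2] at h1
      simp only [inner_sub_left, inner_sub_right, real_inner_smul_right, neg_mul, one_mul,
        neg_neg, neg_sub] at h1
      have a1 : ⟪B (z (k+1)), z k - z 0⟫ = ⟪B (z (k+1)), z k⟫ - ⟪B (z (k+1)), z 0⟫ :=
        inner_sub_right _ _ _
      have a2 : ⟪B (z k), z k - z 0⟫ = ⟪B (z k), z k⟫ - ⟪B (z k), z 0⟫ :=
        inner_sub_right _ _ _
      nlinarith [h1, a1, a2]
    -- expansion of the anchor term of V (k+1)
    have e1i : ((k:ℝ) + 1) * ⟪B (z (k+1)), z (k + 1) - z 0⟫ =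
        (k:ℝ) * ⟪B (z (k+1)), z k - z 0⟫ -
          ((k:ℝ) + 1) * α * ⟪B (z (k+1)), B (zhalf k)⟫ := by
      have a1 : ⟪B (z (k+1)), z k - z 0⟫ = ⟪B (z (k+1)), z k⟫ - ⟪B (z (k+1)), z 0⟫ :=
        inner_sub_right _ _ _
      have a3 : ⟪B (z (k+1)), z (k+1) - z 0⟫ = ⟪B (z (k+1)), z (k+1)⟫ - ⟪B (z (k+1)), z 0⟫ :=
        inner_sub_right _ _ _
      have h1 : ⟪B (z (k+1)), ((k:ℝ) + 1) • (z (k + 1) - z 0)⟫ =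
          ⟪B (z (k+1)), (k:ℝ) • (z k - z 0) - (((k:ℝ) + 1) * α) • B (zhalf k)⟫ := by
        rw [e1]
      rw [real_inner_smul_right] at h1
      rw [h1]
      simp only [inner_sub_right, real_inner_smul_right]
    -- Lipschitz bound (cleared of denominators)
    have lips2 : ((k:ℝ) + 1) * ‖B (z (k+1)) - B (zhalf k)‖ ≤
        L * (α * ‖(k:ℝ) • B (z k) - ((k:ℝ) + 1) • B (zhalf k)‖) := by
      have h1 := hlip (z (k+1)) (zhalf k)
      have h2 : ((k:ℝ) + 1) * ‖z (k + 1) - zhalf k‖ =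
          α * ‖(k:ℝ) • B (z k) - ((k:ℝ) + 1) • B (zhalf k)‖ := by
        have := congrArg norm e3
        rwa [norm_smul, norm_smul, Real.norm_eq_abs, Real.norm_eq_abs,
          abs_of_pos hm, abs_of_pos hα0] at this
      calc ((k:ℝ) + 1) * ‖B (z (k+1)) - B (zhalf k)‖
          ≤ ((k:ℝ) + 1) * (L * ‖z (k + 1) - zhalf k‖) := by
            exact mul_le_mul_of_nonneg_left h1 hm.le
        _ = L * (((k:ℝ) + 1) * ‖z (k + 1) - zhalf k‖) := by ring
        _ = L * (α * ‖(k:ℝ) • B (z k) - ((k:ℝ) + 1) • B (zhalf k)‖) := by rw [h2]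
    have lipsq : ((k:ℝ) + 1) ^ 2 * ‖B (z (k+1)) - B (zhalf k)‖ ^ 2 ≤
        L ^ 2 * α ^ 2 * ‖(k:ℝ) • B (z k) - ((k:ℝ) + 1) • B (zhalf k)‖ ^ 2 := by
      have h0 : (0:ℝ) ≤ ((k:ℝ) + 1) * ‖B (z (k+1)) - B (zhalf k)‖ :=
        mul_nonneg hm.le (norm_nonneg _)
      nlinarith [mul_self_le_mul_self h0 lips2]
    -- norm expansions
    have nd : ‖(k:ℝ) • B (z k) - ((k:ℝ) + 1) • B (zhalf k)‖ ^ 2 =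
        (k:ℝ) ^ 2 * ‖B (z k)‖ ^ 2 -
          2 * (k:ℝ) * ((k:ℝ) + 1) * ⟪B (z k), B (zhalf k)⟫ +
          ((k:ℝ) + 1) ^ 2 * ‖B (zhalf k)‖ ^ 2 := by
      rw [norm_sub_sq_real, norm_smul, norm_smul, real_inner_smul_left,
        real_inner_smul_right, Real.norm_eq_abs, Real.norm_eq_abs, mul_pow, mul_pow,
        sq_abs, sq_abs]
      ring
    have nB : ‖B (z (k+1)) - B (zhalf k)‖ ^ 2 =
        ‖B (z (k+1))‖ ^ 2 - 2 * ⟪B (z (k+1)), B (zhalf k)⟫ + ‖B (zhalf k)‖ ^ 2 :=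
      norm_sub_sq_real _ _
    -- V values
    have hVk : V k = α ^ 2 * (k:ℝ) ^ 2 * ‖B (z k)‖ ^ 2 +
        2 * α * (k:ℝ) * ⟪B (z k), z k - z 0⟫ := rfl
    have hVk1 : V (k + 1) = α ^ 2 * ((k:ℝ) + 1) ^ 2 * ‖B (z (k+1))‖ ^ 2 +
        2 * α * ((k:ℝ) + 1) * ⟪B (z (k+1)), z (k + 1) - z 0⟫ := by
      simp only [hV]; push_cast; ring
    have hVk1' : V (k + 1) = α ^ 2 * ((k:ℝ) + 1) ^ 2 * ‖B (z (k+1))‖ ^ 2 +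
        2 * α * ((k:ℝ) * ⟪B (z (k+1)), z k - z 0⟫ -
          ((k:ℝ) + 1) * α * ⟪B (z (k+1)), B (zhalf k)⟫) := by
      rw [hVk1, ← e1i]; ring
    rw [hVk, hVk1', nd]
    rw [nd, nB] at lipsq
    have P2 := mul_nonneg (mul_nonneg (by positivity : (0:ℝ) ≤ 2 * α) hn0) mono3
    have P1 := mul_le_mul_of_nonneg_left lipsq (sq_nonneg α)
    nlinarith [P1, P2]
  -- lower bound on V
  have low : ∀ N : ℕ, -‖z 0 - zs‖ ^ 2 ≤ V N := by
    intro N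
    have h1 : 0 ≤ ⟪B (z N), z N - zs⟫ := by
      have := hmono (z N) zs
      rwa [hzs, sub_zero] at this
    have h2 : 0 ≤ ‖(α * (N:ℝ)) • B (z N) + (zs - z 0)‖ ^ 2 := by positivity
    have h3 : ‖(α * (N:ℝ)) • B (z N) + (zs - z 0)‖ ^ 2 =
        (α * (N:ℝ)) ^ 2 * ‖B (z N)‖ ^ 2 +
          2 * (α * (N:ℝ)) * ⟪B (z N), zs - z 0⟫ + ‖zs - z 0‖ ^ 2 := by
      rw [norm_add_sq_real, real_inner_smul_left, norm_smul, Real.norm_eq_abs, mul_pow,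
        sq_abs]
      ring
    have h4 : ⟪B (z N), z N - z 0⟫ = ⟪B (z N), z N - zs⟫ + ⟪B (z N), zs - z 0⟫ := by
      rw [← inner_add_right, sub_add_sub_cancel]
    have h5 : ‖zs - z 0‖ = ‖z 0 - zs‖ := norm_sub_rev _ _
    have hVN : V N = α ^ 2 * (N:ℝ) ^ 2 * ‖B (z N)‖ ^ 2 +
        2 * α * (N:ℝ) * ⟪B (z N), z N - z 0⟫ := rfl
    rw [hVN, h4]
    rw [h3, h5] at h2
    nlinarith [mul_nonneg (mul_nonneg hα0.le (Nat.cast_nonneg N : (0:ℝ) ≤ (N:ℝ))) h1]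
  have hV0 : V 0 = 0 := by simp [hV]
  have hsum : ∀ N : ℕ, ∑ k ∈ Finset.range N,
      ‖(k : ℝ) • B (z k) - ((k : ℝ) + 1) • B (zhalf k)‖ ^ 2 ≤
        ‖z 0 - zs‖ ^ 2 / (α ^ 2 * (1 - α ^ 2 * L ^ 2)) := by
    intro N
    rw [le_div_iff₀ hc]
    calc (∑ k ∈ Finset.range N,
          ‖(k : ℝ) • B (z k) - ((k : ℝ) + 1) • B (zhalf k)‖ ^ 2) *
            (α ^ 2 * (1 - α ^ 2 * L ^ 2))
        = ∑ k ∈ Finset.range N, α ^ 2 * (1 - α ^ 2 * L ^ 2) *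
            ‖(k : ℝ) • B (z k) - ((k : ℝ) + 1) • B (zhalf k)‖ ^ 2 := by
          rw [Finset.sum_mul]; exact Finset.sum_congr rfl fun k _ => by ring
      _ ≤ ∑ k ∈ Finset.range N, (V k - V (k + 1)) :=
          Finset.sum_le_sum fun k _ => key k
      _ = V 0 - V N := Finset.sum_range_sub' V N
      _ ≤ ‖z 0 - zs‖ ^ 2 := by
          have := low N; rw [hV0]; linarith
  exact Real.tsum_le_of_sum_range_le (fun n => by positivity) hsum
end

section
/- Let B : H → H be monotone and L-Lipschitz with zero z⋆, α ∈ (0, 1/L), and let (z_k) be the FEG iterates with β_k = 1/(k+1). Define V_k = (α k²/2)‖B z_k‖² + k⟨B z_k, z_k - z_0⟩ + (1/(2α))‖z_0 - z⋆‖². Then V_k ≥ 0 for all k, and V_k - V_{k+1} ≥ (α(1 - α²L²)/2)‖k • B z_k - (k+1) • B z_{k+1/2}‖² for all k ≥ 0. -/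
/-!
Expanding the square shows `V_k = k⟪B z_k, z_k - z⋆⟫ + ‖α k B z_k + z⋆ - z_0‖² / (2α)`, which is
nonnegative by monotonicity at the zero `z⋆`. For the descent, the multiplied update
`(k+1) z_{k+1} = z_0 + k z_k - (k+1) α B z_{k+1/2}` turns `V_k - V_{k+1}` into the exact identity
`k(k+1)⟪B z_{k+1} - B z_k, z_{k+1} - z_k⟫ + (α/2)‖k B z_k - (k+1) B z_{k+1/2}‖²
  - (α/2)(k+1)²‖B z_{k+1} - B z_{k+1/2}‖²`.
The first term is nonnegative by monotonicity, and since
`(k+1)(z_{k+1} - z_{k+1/2}) = α (k B z_k - (k+1) B z_{k+1/2})`, the Lipschitz bound controls the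
last term by `(α/2) α²L² ‖k B z_k - (k+1) B z_{k+1/2}‖²`.
-/

open RealInnerProductSpace

section FEGLyapunov

variable {H : Type*} [NormedAddCommGroup H] [InnerProductSpace ℝ H]

/-- The potential `V_k` of the informal statement, with `t = k`, `g = B z_k`, `z = z_k`. -/
noncomputable def fegLyapunov (α t : ℝ) (g z z₀ zs : H) : ℝ :=
  α * t ^ 2 / 2 * ‖g‖ ^ 2 + t * ⟪g, z - z₀⟫ + 1 / (2 * α) * ‖z₀ - zs‖ ^ 2

theorem fegLyapunov_eq_inner_add_norm_sq {α : ℝ} (hα : α ≠ 0) (t : ℝ) (g z z₀ zs : H) :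
    fegLyapunov α t g z z₀ zs =
      t * ⟪g, z - zs⟫ + 1 / (2 * α) * ‖(α * t) • g + (zs - z₀)‖ ^ 2 := by
  have hsplit : ⟪g, z - z₀⟫ = ⟪g, z - zs⟫ + ⟪g, zs - z₀⟫ := by
    rw [← inner_add_right, sub_add_sub_cancel]
  rw [fegLyapunov, hsplit, norm_sub_rev z₀, norm_add_sq_real, norm_smul, Real.norm_eq_abs,
    mul_pow, sq_abs, real_inner_smul_left]
  field_simp
  ring

theorem fegLyapunov_nonneg {α t : ℝ} (hα : 0 < α) (ht : 0 ≤ t) {g z zs : H}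
    (hg : 0 ≤ ⟪g, z - zs⟫) (z₀ : H) : 0 ≤ fegLyapunov α t g z z₀ zs := by
  rw [fegLyapunov_eq_inner_add_norm_sq hα.ne']
  positivity

theorem fegLyapunov_sub_fegLyapunov_add_one (α t : ℝ) {z₀ z z' g gh g' : H} (zs : H)
    (hz' : (t + 1) • z' = z₀ + t • z - ((t + 1) * α) • gh) :
    fegLyapunov α t g z z₀ zs - fegLyapunov α (t + 1) g' z' z₀ zs =
      t * (t + 1) * ⟪g' - g, z' - z⟫ + α / 2 * ‖t • g - (t + 1) • gh‖ ^ 2 -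
        α / 2 * (t + 1) ^ 2 * ‖g' - gh‖ ^ 2 := by
  have hnext : (t + 1) • (z' - z₀) = t • (z - z₀) - ((t + 1) * α) • gh := by
    rw [smul_sub, hz']; module
  have hstep : (t + 1) • (z' - z) = -(z - z₀) - ((t + 1) * α) • gh := by
    rw [smul_sub, hz']; module
  have inner_next : (t + 1) * ⟪g', z' - z₀⟫ = t * ⟪g', z - z₀⟫ - (t + 1) * α * ⟪g', gh⟫ := by
    rw [← real_inner_smul_right, hnext, inner_sub_right, real_inner_smul_right,
      real_inner_smul_right]
  have inner_step : (t + 1) * ⟪g' - g, z' - z⟫ =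
      -⟪g', z - z₀⟫ + ⟪g, z - z₀⟫ - (t + 1) * α * ⟪g', gh⟫ + (t + 1) * α * ⟪g, gh⟫ := by
    rw [← real_inner_smul_right, hstep]
    simp only [inner_sub_left, inner_sub_right, inner_neg_right, real_inner_smul_right]
    ring
  have hsq : ‖t • g - (t + 1) • gh‖ ^ 2 =
      t ^ 2 * ‖g‖ ^ 2 - 2 * t * (t + 1) * ⟪g, gh⟫ + (t + 1) ^ 2 * ‖gh‖ ^ 2 := by
    rw [norm_sub_sq_real, norm_smul, norm_smul, real_inner_smul_left, real_inner_smul_right,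
      Real.norm_eq_abs, Real.norm_eq_abs, mul_pow, mul_pow, sq_abs, sq_abs]
    ring
  rw [fegLyapunov, fegLyapunov, hsq, norm_sub_sq_real g' gh]
  linear_combination (-t) * inner_step - inner_next

theorem add_one_smul_sub_half_eq {α t : ℝ} {z₀ z zh z' g gh : H}
    (hzh : (t + 1) • zh = z₀ + t • z - (t * α) • g)
    (hz' : (t + 1) • z' = z₀ + t • z - ((t + 1) * α) • gh) :
    (t + 1) • (z' - zh) = α • (t • g - (t + 1) • gh) := by
  rw [smul_sub, hz', hzh]; module

theorem add_one_mul_norm_sq_le {α t L : ℝ} (ht : 0 ≤ t) {z₀ z zh z' g gh g' : H}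
    (hzh : (t + 1) • zh = z₀ + t • z - (t * α) • g)
    (hz' : (t + 1) • z' = z₀ + t • z - ((t + 1) * α) • gh)
    (hlip : ‖g' - gh‖ ≤ L * ‖z' - zh‖) :
    (t + 1) ^ 2 * ‖g' - gh‖ ^ 2 ≤ α ^ 2 * L ^ 2 * ‖t • g - (t + 1) • gh‖ ^ 2 := by
  have ht1 : 0 ≤ t + 1 := by linarith
  have hnorm : (t + 1) * ‖z' - zh‖ = |α| * ‖t • g - (t + 1) • gh‖ := by
    have := congrArg norm (add_one_smul_sub_half_eq hzh hz')
    rwa [norm_smul, norm_smul, Real.norm_eq_abs, Real.norm_eq_abs, abs_of_nonneg ht1] at this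
  have hle : (t + 1) * ‖g' - gh‖ ≤ L * (|α| * ‖t • g - (t + 1) • gh‖) := by
    rw [← hnorm, mul_left_comm]
    exact mul_le_mul_of_nonneg_left hlip ht1
  calc (t + 1) ^ 2 * ‖g' - gh‖ ^ 2 = ((t + 1) * ‖g' - gh‖) ^ 2 := by ring
    _ ≤ (L * (|α| * ‖t • g - (t + 1) • gh‖)) ^ 2 := by gcongr
    _ = α ^ 2 * L ^ 2 * ‖t • g - (t + 1) • gh‖ ^ 2 := by rw [← sq_abs α]; ring

theorem fegLyapunov_sub_fegLyapunov_add_one_ge {α t L : ℝ} (hα : 0 ≤ α) (ht : 0 ≤ t)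
    {z₀ z zh z' g gh g' : H} (zs : H)
    (hzh : (t + 1) • zh = z₀ + t • z - (t * α) • g)
    (hz' : (t + 1) • z' = z₀ + t • z - ((t + 1) * α) • gh)
    (hmono : 0 ≤ ⟪g' - g, z' - z⟫) (hlip : ‖g' - gh‖ ≤ L * ‖z' - zh‖) :
    α * (1 - α ^ 2 * L ^ 2) / 2 * ‖t • g - (t + 1) • gh‖ ^ 2 ≤
      fegLyapunov α t g z z₀ zs - fegLyapunov α (t + 1) g' z' z₀ zs := by
  rw [fegLyapunov_sub_fegLyapunov_add_one α t zs hz']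
  have hlip_sq := mul_le_mul_of_nonneg_left (add_one_mul_norm_sq_le ht hzh hz' hlip)
    (by positivity : 0 ≤ α / 2)
  have := mul_nonneg (by positivity : 0 ≤ t * (t + 1)) hmono
  linarith

end FEGLyapunov

theorem stmt_8_general {H : Type*} [NormedAddCommGroup H] [InnerProductSpace ℝ H]
    (B : H → H) (L α : ℝ)
    (hmono : ∀ u v : H, 0 ≤ ⟪B u - B v, u - v⟫)
    (hlip : ∀ u v : H, ‖B u - B v‖ ≤ L * ‖u - v‖)
    (zs : H) (hzs : B zs = 0)
    (hα0 : 0 < α)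
    (z zhalf : ℕ → H)
    (hzhalf : ∀ k : ℕ, zhalf k =
      (1 / ((k : ℝ) + 1)) • z 0 + (1 - 1 / ((k : ℝ) + 1)) • (z k - α • B (z k)))
    (hz : ∀ k : ℕ, z (k + 1) =
      (1 / ((k : ℝ) + 1)) • z 0 + (1 - 1 / ((k : ℝ) + 1)) • z k - α • B (zhalf k))
    (V : ℕ → ℝ)
    (hV : ∀ k : ℕ, V k = α * (k : ℝ) ^ 2 / 2 * ‖B (z k)‖ ^ 2 +
      (k : ℝ) * ⟪B (z k), z k - z 0⟫ + 1 / (2 * α) * ‖z 0 - zs‖ ^ 2) :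
    (∀ k : ℕ, 0 ≤ V k) ∧
      (∀ k : ℕ, α * (1 - α ^ 2 * L ^ 2) / 2 *
          ‖(k : ℝ) • B (z k) - ((k : ℝ) + 1) • B (zhalf k)‖ ^ 2 ≤ V k - V (k + 1)) := by
  have hV' (k : ℕ) : V k = fegLyapunov α k (B (z k)) (z k) (z 0) zs := hV k
  refine ⟨fun k => ?_, fun k => ?_⟩
  · have hmono_zs := hmono (z k) zs
    rw [hzs, sub_zero] at hmono_zs
    exact hV' k ▸ fegLyapunov_nonneg hα0 k.cast_nonneg hmono_zs (z 0)
  · rw [hV' k, hV' (k + 1), Nat.cast_succ]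
    refine fegLyapunov_sub_fegLyapunov_add_one_ge hα0.le k.cast_nonneg zs ?_ ?_
      (hmono _ _) (hlip _ _)
    · rw [hzhalf k]; match_scalars <;> field_simp <;> ring
    · rw [hz k]; match_scalars <;> field_simp; ring

theorem stmt_8 {H : Type*} [NormedAddCommGroup H] [InnerProductSpace ℝ H]
    (B : H → H) (L α : ℝ) (hL : 0 < L)
    (hmono : ∀ u v : H, 0 ≤ ⟪B u - B v, u - v⟫)
    (hlip : ∀ u v : H, ‖B u - B v‖ ≤ L * ‖u - v‖)
    (zs : H) (hzs : B zs = 0)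
    (hα0 : 0 < α) (hα1 : α < 1 / L)
    (z zhalf : ℕ → H)
    (hzhalf : ∀ k : ℕ, zhalf k =
      (1 / ((k : ℝ) + 1)) • z 0 + (1 - 1 / ((k : ℝ) + 1)) • (z k - α • B (z k)))
    (hz : ∀ k : ℕ, z (k + 1) =
      (1 / ((k : ℝ) + 1)) • z 0 + (1 - 1 / ((k : ℝ) + 1)) • z k - α • B (zhalf k))
    (V : ℕ → ℝ)
    (hV : ∀ k : ℕ, V k = α * (k : ℝ) ^ 2 / 2 * ‖B (z k)‖ ^ 2 +
      (k : ℝ) * ⟪B (z k), z k - z 0⟫ + 1 / (2 * α) * ‖z 0 - zs‖ ^ 2) :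
    (∀ k : ℕ, 0 ≤ V k) ∧
      (∀ k : ℕ, α * (1 - α ^ 2 * L ^ 2) / 2 *
          ‖(k : ℝ) • B (z k) - ((k : ℝ) + 1) • B (zhalf k)‖ ^ 2 ≤ V k - V (k + 1)) :=
  stmt_8_general B L α hmono hlip zs hzs hα0 z zhalf hzhalf hz V hV
end

section
/- Let B : H → H be monotone and L-Lipschitz with zero z⋆. The first step of FEG with α ∈ (0, 1/L] satisfies: if z_{1/2} = z_0 and z_1 = z_0 - α • B z_0, then (α/2)‖B z_1‖² - α⟨B z_1, B z_0⟩ ≤ -(α/2)(1 - α²L²)‖B z_0‖². Equivalently, V_1 ≤ V_0 - (α/2)(1 - α²L²)‖B z_0‖² where V_k is the FEG Lyapunov function. -/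
open RealInnerProductSpace

theorem stmt_9 {H : Type*} [NormedAddCommGroup H] [InnerProductSpace ℝ H]
    (B : H → H) (L α : ℝ) (hL : 0 < L)
    (hmono : ∀ u v : H, 0 ≤ ⟪B u - B v, u - v⟫)
    (hlip : ∀ u v : H, ‖B u - B v‖ ≤ L * ‖u - v‖)
    (zs : H) (hzs : B zs = 0)
    (hα0 : 0 < α) (hα1 : α ≤ 1 / L)
    (z0 z1 : H) (hz1 : z1 = z0 - α • B z0) :
    α / 2 * ‖B z1‖ ^ 2 - α * ⟪B z1, B z0⟫ ≤
      -(α / 2) * (1 - α ^ 2 * L ^ 2) * ‖B z0‖ ^ 2 := by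
  have h := hlip z1 z0
  have hdiff : z1 - z0 = -(α • B z0) := by rw [hz1]; abel
  rw [hdiff, norm_neg, norm_smul, Real.norm_eq_abs, abs_of_pos hα0] at h
  have hsq : ‖B z1 - B z0‖ ^ 2 ≤ (L * (α * ‖B z0‖)) ^ 2 := by
    apply pow_le_pow_left₀ (norm_nonneg _) h
  rw [norm_sub_sq_real] at hsq
  nlinarith [norm_nonneg (B z0), norm_nonneg (B z1)]
end
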